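/- The exponential generating function of the sequence d_n, where d_n is the sum over ordered compositions (k_1,...,k_t) of n with all parts k_i ≥ 2 of (n!/(k_1!⋯k_t!))·∏(k_i − 1) (and d_0 = 1, d_1 = 0), equals e^{−x}/(1−x); that is, ∑_{n≥0} d_n x^n / n! = e^{−x}/(1−x) as formal power series. -/

import Mathlib

/-!
Dividing by `n!`, `d n / n! = ∑_{(k_1,…,k_t) ⊨ n} ∏ w(k_i)` with `w k = (k - 1) / k!`; the
restriction `k_i ≥ 2` may be dropped because `w 1 = 0`. Splitting off the first block shows that
such a sum `S` over all compositions satisfies `S = 1 + A S`, where `A = ∑_{k ≥ 1} w k X^k`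
`= e^X (X - 1) + 1`. Hence `S · (1 - X) e^X = 1`, and `e^{-X} / (1 - X)` is the inverse of
`(1 - X) e^X`.
-/

open Finset PowerSeries

/-- `d n` : the number of "decorated compositions" from the paper's formula. -/
noncomputable def compositionCount (n : ℕ) : ℕ :=
  ∑ c ∈ Finset.univ.filter (fun c : Composition n => ∀ k ∈ c.blocks, 2 ≤ k),
    (Nat.factorial n / (c.blocks.map Nat.factorial).prod) *
      (c.blocks.map (fun k => k - 1)).prod

open scoped Nat

namespace Composition

theorem headI_pos {n : ℕ} (c : Composition (n + 1)) : 0 < c.blocks.headI := by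
  obtain ⟨a, t, h⟩ := List.exists_cons_of_ne_nil (mt c.blocks_eq_nil.1 n.succ_ne_zero)
  simpa [h] using c.blocks_pos (h ▸ List.mem_cons_self)

def consEquiv (n : ℕ) : Composition (n + 1) ≃ Σ k : Fin (n + 1), Composition (n - k) where
  toFun c :=
    ⟨⟨c.blocks.headI - 1, by have := c.blocks.headI_add_tail_sum; grind [c.blocks_sum]⟩,
      ⟨c.blocks.tail, fun hi => c.blocks_pos (List.mem_of_mem_tail hi), by
        have := c.blocks.headI_add_tail_sum; have := c.headI_pos; grind [c.blocks_sum]⟩⟩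
  invFun p := ⟨(p.1 + 1) :: p.2.blocks, by
      rintro i (_ | ⟨_, hi⟩)
      exacts [Nat.succ_pos _, p.2.blocks_pos hi], by
      have := p.1.isLt; simp [p.2.blocks_sum]; omega⟩
  left_inv c := by
    obtain ⟨a, t, h⟩ := List.exists_cons_of_ne_nil (mt c.blocks_eq_nil.1 n.succ_ne_zero)
    have := c.headI_pos
    ext1
    simp only [h, List.headI_cons, List.tail_cons] at this ⊢
    congr 1
    omega
  right_inv p := rfl

theorem sum_blocks_succ {M : Type*} [AddCommMonoid M] (F : List ℕ → M) (n : ℕ) :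
    ∑ c : Composition (n + 1), F c.blocks =
      ∑ k ∈ range (n + 1), ∑ c : Composition (n - k), F ((k + 1) :: c.blocks) := by
  rw [← (consEquiv n).symm.sum_comp, Fintype.sum_sigma,
    ← Fin.sum_univ_eq_sum_range (fun k => ∑ c : Composition (n - k), F ((k + 1) :: c.blocks))]
  rfl

end Composition

section CompositionSum

variable {R : Type*} [Semiring R] (f : ℕ → R)

def compositionSum (n : ℕ) : R := ∑ c : Composition n, (c.blocks.map f).prod

@[simp]
theorem compositionSum_zero : compositionSum f 0 = 1 := by
  have blocks_nil (c : Composition 0) : c.blocks = [] := c.blocks_eq_nil.2 rfl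
  simp [compositionSum, blocks_nil, composition_card]

theorem compositionSum_succ (n : ℕ) :
    compositionSum f (n + 1) = ∑ k ∈ range (n + 1), f (k + 1) * compositionSum f (n - k) := by
  rw [compositionSum, Composition.sum_blocks_succ fun l => (l.map f).prod]
  simp only [compositionSum, List.map_cons, List.prod_cons, mul_sum]

end CompositionSum

theorem mk_compositionSum_mul_one_sub {R : Type*} [CommRing R] (f : ℕ → R) :
    PowerSeries.mk (compositionSum f) * (1 - X * PowerSeries.mk fun k => f (k + 1)) = 1 := by
  ext (_ | n)
  · simp
  · rw [mul_sub, mul_one, mul_left_comm, map_sub, coeff_succ_X_mul, mul_comm, coeff_mul,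
      Nat.sum_antidiagonal_eq_sum_range_succ_mk]
    simp [compositionSum_succ]

def blockWeight (k : ℕ) : ℚ := ((k : ℚ) - 1) / k !

theorem cast_compositionCount_term_div_factorial {n : ℕ} (c : Composition n) :
    ((n ! / (c.blocks.map Nat.factorial).prod * (c.blocks.map fun k => k - 1).prod : ℕ) : ℚ) /
      n ! = (c.blocks.map blockWeight).prod := by
  simp only [← c.ofFn_blocksFun, List.map_ofFn, List.prod_ofFn, Function.comp_def]
  have hdvd : ∏ i, (c.blocksFun i)! ∣ n ! := by
    simpa [c.sum_blocksFun] using Nat.prod_factorial_dvd_factorial_sum univ c.blocksFun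
  have hpos : ((∏ i, (c.blocksFun i)! : ℕ) : ℚ) ≠ 0 := by positivity
  rw [Nat.cast_mul, Nat.cast_div hdvd hpos]
  simp only [blockWeight, prod_div_distrib, Nat.cast_prod, Nat.cast_pred (c.one_le_blocksFun _)]
  field_simp

theorem compositionCount_div_factorial (n : ℕ) :
    (compositionCount n : ℚ) / n ! = compositionSum blockWeight n := by
  rw [compositionCount, Nat.cast_sum, sum_div]
  simp only [cast_compositionCount_term_div_factorial]
  refine sum_filter_of_ne fun c _ hc k hk => ?_
  by_contra! hk2
  have : blockWeight k = 0 := by simp [blockWeight, show k = 1 by grind [c.one_le_blocks hk]]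
  exact hc (List.prod_eq_zero (this ▸ List.mem_map_of_mem hk))

theorem one_sub_X_mul_mk_blockWeight :
    1 - X * PowerSeries.mk (fun k => blockWeight (k + 1)) = (1 - X) * exp ℚ := by
  ext (_ | n)
  · simp
  · rw [map_sub, coeff_succ_X_mul, sub_mul, one_mul, map_sub, coeff_succ_X_mul]
    simp [blockWeight, coeff_one, Nat.factorial_succ]
    field_simp
    ring

theorem egf_compositionCount_eq :
    (PowerSeries.mk fun n => (compositionCount n : ℚ) / (n.factorial : ℚ)) =
      PowerSeries.rescale (-1 : ℚ) (PowerSeries.exp ℚ) *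
        PowerSeries.mk (fun _ => (1 : ℚ)) := by
  have egf_mul : (PowerSeries.mk fun n => (compositionCount n : ℚ) / n !) *
      ((1 - X) * exp ℚ) = 1 := by
    simpa only [compositionCount_div_factorial, one_sub_X_mul_mk_blockWeight]
      using mk_compositionSum_mul_one_sub blockWeight
  have mul_inverse : ((1 - X) * exp ℚ) * (rescale (-1 : ℚ) (exp ℚ) * PowerSeries.mk 1) = 1 := by
    calc _ = (exp ℚ * rescale (-1 : ℚ) (exp ℚ)) * (PowerSeries.mk 1 * (1 - X)) := by ring
      _ = 1 := by
        rw [mk_one_mul_one_sub_eq_one, mul_one]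
        exact exp_mul_exp_neg_eq_one
  exact left_inv_eq_right_inv egf_mul mul_inverse
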